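/- arXiv:1301.7597 — 4 statements merged into one kernel-verified Lean document; each statement's English description precedes it below -/
import Mathlib

section
/- Let G be a factorizable graph with perfect matching M, let X ⊆ V(G) be a separating set, and let P be an M-saturated path in G. Then every connected component of P[X] (the subgraph of P induced on X) is itself an M-saturated path. -/
open SimpleGraph

variable {V : Type*}

/-- `M` is a matching of `G`, given as a set of edges. -/
def IsMatchingSet (G : SimpleGraph V) (M : Set (Sym2 V)) : Prop :=
  M ⊆ G.edgeSet ∧ ∀ (v : V), ∀ e ∈ M, ∀ f ∈ M, v ∈ e → v ∈ f → e = f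

/-- `M` is a perfect matching of `G`: every vertex lies on exactly one edge of `M`. -/
def IsPerfectMatchingSet (G : SimpleGraph V) (M : Set (Sym2 V)) : Prop :=
  M ⊆ G.edgeSet ∧ ∀ v : V, ∃! e, e ∈ M ∧ v ∈ e

/-- `M` is a maximum matching of `G`. -/
def IsMaximumMatchingSet (G : SimpleGraph V) (M : Set (Sym2 V)) : Prop :=
  IsMatchingSet G M ∧ ∀ M', IsMatchingSet G M' → M'.ncard ≤ M.ncard

/-- `v` is exposed by the matching `M`. -/
def ExposedBy (M : Set (Sym2 V)) (v : V) : Prop := ∀ e ∈ M, v ∉ e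

/-- The Gallai–Edmonds set `D(G)`: vertices missed by some maximum matching. -/
def Dset (G : SimpleGraph V) : Set V :=
  {v | ∃ M, IsMaximumMatchingSet G M ∧ ExposedBy M v}

/-- `A(G) = Γ_G(D(G))`, the neighbors of `D(G)` outside `D(G)`. -/
def Aset (G : SimpleGraph V) : Set V :=
  {v | v ∉ Dset G ∧ ∃ u ∈ Dset G, G.Adj u v}

/-- `C(G) = V(G) \ (D(G) ∪ A(G))`. -/
def Cset (G : SimpleGraph V) : Set V :=
  {v | v ∉ Dset G ∧ v ∉ Aset G}

/-- A graph is factorizable if it has a perfect matching. -/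
def Factorizable (G : SimpleGraph V) : Prop := ∃ M, IsPerfectMatchingSet G M

/-- A walk is `M`-alternating if its edges alternate between `M` and its complement. -/
def IsAltWalk {G : SimpleGraph V} {u v : V} (M : Set (Sym2 V)) (p : G.Walk u v) : Prop :=
  List.Chain' (fun e f => e ∈ M ↔ f ∉ M) p.edges

/-- An `M`-balanced path from `u` to `v`: an even `M`-alternating path whose matching
edges form a near-perfect matching of the path exposing only `v` (first edge is in `M`). -/
def IsBalancedPath {G : SimpleGraph V} {u v : V} (M : Set (Sym2 V)) (p : G.Walk u v) : Prop :=
  p.IsPath ∧ Even p.length ∧ IsAltWalk M p ∧ ∀ e, p.edges.head? = some e → e ∈ M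

/-- An `M`-saturated path: odd `M`-alternating, matching edges perfectly cover the path. -/
def IsSaturatedPath {G : SimpleGraph V} {u v : V} (M : Set (Sym2 V)) (p : G.Walk u v) : Prop :=
  p.IsPath ∧ Odd p.length ∧ IsAltWalk M p ∧ ∀ e, p.edges.head? = some e → e ∈ M

/-- An `M`-exposed path: odd `M`-alternating, non-matching edges perfectly cover the path. -/
def IsExposedPath {G : SimpleGraph V} {u v : V} (M : Set (Sym2 V)) (p : G.Walk u v) : Prop :=
  p.IsPath ∧ Odd p.length ∧ IsAltWalk M p ∧ ∀ e, p.edges.head? = some e → e ∉ M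

/-- The allowed edges of `G`: edges lying in some perfect matching. -/
def allowedEdges (G : SimpleGraph V) : Set (Sym2 V) :=
  {e | ∃ M, IsPerfectMatchingSet G M ∧ e ∈ M}

/-- `u` and `v` lie in the same factor-connected component of `G`. -/
def SameFC (G : SimpleGraph V) (u v : V) : Prop :=
  (SimpleGraph.fromEdgeSet (allowedEdges G)).Reachable u v

/-- `X` is separating: every factor-connected component lies inside `X` or misses `X`. -/
def IsSeparating (G : SimpleGraph V) (X : Set V) : Prop :=
  ∀ u v : V, SameFC G u v → (u ∈ X ↔ v ∈ X)

/-- A factorizable graph `G` is saturated if adding any non-edge strictly increases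
the number of perfect matchings. -/
def Saturated (G : SimpleGraph V) : Prop :=
  Factorizable G ∧ ∀ x y : V, x ≠ y → ¬ G.Adj x y →
    {N | IsPerfectMatchingSet G N}.ncard <
      {N | IsPerfectMatchingSet (G ⊔ SimpleGraph.fromEdgeSet {s(x, y)}) N}.ncard


/-- `z` is reachable from `w` inside the subgraph `H`. -/
def ReachIn {G : SimpleGraph V} (H : G.Subgraph) (w z : V) : Prop :=
  ∃ (hw : w ∈ H.verts) (hz : z ∈ H.verts), H.coe.Reachable ⟨w, hw⟩ ⟨z, hz⟩

/-- The connected component of `w` in the subgraph `H`, as a subgraph of `G`. -/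
def compSub {G : SimpleGraph V} (H : G.Subgraph) (w : V) : G.Subgraph where
  verts := {z | ReachIn H w z}
  Adj a b := H.Adj a b ∧ ReachIn H w a ∧ ReachIn H w b
  adj_sub h := H.adj_sub h.1
  edge_vert h := h.2.1
  symm := ⟨fun a b h => ⟨h.1.symm, h.2.2, h.2.1⟩⟩

/-!
Every edge of `M` is allowed, so a separating set `X` contains both ends of each matching edge or
neither. Along `p = v₀ v₁ … v₂ₖ₊₁` the matching pairs `{v₂ᵢ, v₂ᵢ₊₁}` therefore lie wholly inside or
wholly outside `X`, and a maximal run of consecutive vertices of `p` in `X` starts at an even index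
and ends at an odd one: it is an `M`-saturated subpath. The induction peels off the first two edges
of `p`: a component of `p[X]` either reaches the first vertex, and is then grown two edges at a time
from the start, or it is already a component of `p'[X]` for the remaining path `p'`.
-/

variable {G : SimpleGraph V}

lemma IsSeparating.mem_iff_of_mem_allowedEdges {X : Set V} (hX : IsSeparating G X) {u v : V}
    (he : s(u, v) ∈ allowedEdges G) : u ∈ X ↔ v ∈ X := by
  obtain ⟨M, hM, huv⟩ := he
  exact hX u v (Adj.reachable ⟨⟨M, hM, huv⟩, (hM.1 huv).ne⟩)

section ReachIn

variable {S K : G.Subgraph} {u v w : V}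

lemma ReachIn.refl (hu : u ∈ K.verts) : ReachIn K u u := ⟨hu, hu, Reachable.refl _⟩

lemma ReachIn.trans (huv : ReachIn K u v) (hvw : ReachIn K v w) : ReachIn K u w :=
  ⟨huv.1, hvw.2.1, huv.2.2.trans hvw.2.2⟩

lemma ReachIn.of_adj (h : K.Adj u v) : ReachIn K u v :=
  ⟨h.fst_mem, h.snd_mem, Adj.reachable (G := K.coe) h⟩

lemma ReachIn.mono (hle : S ≤ K) (h : ReachIn S u v) : ReachIn K u v :=
  ⟨hle.1 h.1, hle.1 h.2.1, h.2.2.map (Subgraph.inclusion hle)⟩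

lemma SimpleGraph.Subgraph.Connected.reachIn (hS : S.Connected) (hu : u ∈ S.verts)
    (hv : v ∈ S.verts) : ReachIn S u v :=
  ⟨hu, hv, hS ⟨u, hu⟩ ⟨v, hv⟩⟩

/-- `S` is a union of connected components of `K`. -/
def SimpleGraph.Subgraph.IsAdjClosed (S K : G.Subgraph) : Prop :=
  S ≤ K ∧ ∀ ⦃u v⦄, u ∈ S.verts → K.Adj u v → S.Adj u v

lemma SimpleGraph.Subgraph.IsAdjClosed.mem_of_reachIn (hS : S.IsAdjClosed K) (hu : u ∈ S.verts)
    (h : ReachIn K u v) : v ∈ S.verts := by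
  obtain ⟨_, _, ⟨r⟩⟩ := h
  suffices ∀ (x y : K.verts) (r : K.coe.Walk x y), x.1 ∈ S.verts → y.1 ∈ S.verts from
    this _ _ r hu
  intro x y r
  induction r with
  | nil => exact id
  | cons hxy _ ih => exact fun hx => ih (hS.2 hx hxy).snd_mem

lemma compSub_eq_of_isAdjClosed (hS : S.IsAdjClosed K) (hc : S.Connected) (hw : w ∈ S.verts) :
    compSub K w = S := by
  have key : ∀ u, ReachIn K w u ↔ u ∈ S.verts := fun u =>
    ⟨hS.mem_of_reachIn hw, fun hu => (hc.reachIn hw hu).mono hS.1⟩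
  ext x y
  · exact key x
  · exact ⟨fun ⟨hxy, hx, _⟩ => hS.2 ((key x).1 hx) hxy,
      fun hxy => ⟨hS.1.2 hxy, (key x).2 hxy.fst_mem, (key y).2 hxy.snd_mem⟩⟩

end ReachIn

namespace SimpleGraph.Walk

variable {X : Set V} {a b c u v w x y : V}

/-- The paper's `P[X]`. -/
def inducedOn (p : G.Walk u v) (X : Set V) : G.Subgraph :=
  p.toSubgraph.induce (X ∩ p.toSubgraph.verts)

lemma mem_inducedOn_verts {p : G.Walk u v} : w ∈ (p.inducedOn X).verts ↔ w ∈ X ∧ w ∈ p.support :=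
  and_congr_right fun _ => p.mem_verts_toSubgraph

lemma inducedOn_adj {p : G.Walk u v} :
    (p.inducedOn X).Adj x y ↔ x ∈ X ∧ y ∈ X ∧ p.toSubgraph.Adj x y :=
  ⟨fun ⟨hx, hy, h⟩ => ⟨hx.1, hy.1, h⟩, fun ⟨hx, hy, h⟩ => ⟨⟨hx, h.fst_mem⟩, ⟨hy, h.snd_mem⟩, h⟩⟩

lemma inducedOn_le_cons (h : G.Adj a c) (p : G.Walk c b) :
    p.inducedOn X ≤ (cons h p).inducedOn X := by
  constructor
  · intro v hv
    rw [mem_inducedOn_verts] at hv ⊢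
    exact ⟨hv.1, List.mem_cons_of_mem _ hv.2⟩
  · intro x y hxy
    rw [inducedOn_adj] at hxy ⊢
    exact ⟨hxy.1, hxy.2.1, Subgraph.sup_adj.2 (Or.inr hxy.2.2)⟩

lemma reachIn_inducedOn_cons (h : G.Adj a c) (p : G.Walk c b) (ha : a ∈ X) (hc : c ∈ X) :
    ReachIn ((cons h p).inducedOn X) a c :=
  ReachIn.of_adj (inducedOn_adj.2 ⟨ha, hc, by simp⟩)

lemma support_subset_of_le_inducedOn {p : G.Walk u v} {q : G.Walk x y}
    (hqp : q.toSubgraph ≤ p.inducedOn X) : q.support ⊆ p.support := fun _ hv =>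
  (mem_inducedOn_verts.1 (hqp.1 ((q.mem_verts_toSubgraph).2 hv))).2

lemma IsPath.cons_of_support_subset {h : G.Adj a c} {p : G.Walk c b} {q : G.Walk c y}
    (hp : (cons h p).IsPath) (hq : q.IsPath) (hqp : q.support ⊆ p.support) :
    (cons h q).IsPath :=
  (cons_isPath_iff h q).2 ⟨hq, fun ha => ((cons_isPath_iff h p).1 hp).2 (hqp ha)⟩

lemma isAdjClosed_nil (p : G.Walk u v) (hc : c ∈ X) (hcp : c ∈ p.support)
    (hnbr : ∀ v, p.toSubgraph.Adj c v → v ∉ X) :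
    (nil : G.Walk c c).toSubgraph.IsAdjClosed (p.inducedOn X) := by
  refine ⟨⟨?_, fun x y h => by simp at h⟩, fun x y hx hxy => ?_⟩
  · intro x hx
    rw [mem_verts_toSubgraph, support_nil, List.mem_singleton] at hx
    exact mem_inducedOn_verts.2 (hx ▸ ⟨hc, hcp⟩)
  · rw [mem_verts_toSubgraph, support_nil, List.mem_singleton] at hx
    subst hx
    obtain ⟨-, hy, hxy⟩ := inducedOn_adj.1 hxy
    exact absurd hy (hnbr y hxy)

lemma isAdjClosed_cons (h : G.Adj a c) {p : G.Walk c b} {q : G.Walk c y}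
    (hq : q.toSubgraph.IsAdjClosed (p.inducedOn X)) (ha : a ∈ X) (hap : a ∉ p.support) :
    (cons h q).toSubgraph.IsAdjClosed ((cons h p).inducedOn X) := by
  have hc : c ∈ X := (mem_inducedOn_verts.1 (hq.1.1 q.start_mem_verts_toSubgraph)).1
  refine ⟨sup_le ?_ (hq.1.trans (inducedOn_le_cons h p)), fun x y hx hxy => ?_⟩
  · exact subgraphOfAdj_le_of_adj _ (inducedOn_adj.2 ⟨ha, hc, by simp⟩)
  · obtain ⟨hxX, hyX, hxy⟩ := inducedOn_adj.1 hxy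
    rcases Subgraph.sup_adj.1 hxy with hxy | hxy
    · exact Subgraph.sup_adj.2 (Or.inl hxy)
    · have hxa : x ≠ a := fun hxa => hap (hxa ▸ p.mem_verts_toSubgraph.1 hxy.fst_mem)
      have hxq : x ∈ q.toSubgraph.verts := by
        rw [mem_verts_toSubgraph, support_cons, List.mem_cons] at hx
        exact q.mem_verts_toSubgraph.2 (hx.resolve_left hxa)
      exact Subgraph.sup_adj.2 (Or.inr (hq.2 hxq (inducedOn_adj.2 ⟨hxX, hyX, hxy⟩)))

lemma _root_.SimpleGraph.Subgraph.IsAdjClosed.of_cons {S : G.Subgraph} (h : G.Adj a c)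
    {p : G.Walk c b} (hS : S.IsAdjClosed (p.inducedOn X)) (hap : a ∉ p.support)
    (hc : c ∈ S.verts → a ∉ X) : S.IsAdjClosed ((cons h p).inducedOn X) := by
  refine ⟨hS.1.trans (inducedOn_le_cons h p), fun x y hx hxy => ?_⟩
  have hxp : x ∈ p.support := (mem_inducedOn_verts.1 (hS.1.1 hx)).2
  obtain ⟨hxX, hyX, hxy⟩ := inducedOn_adj.1 hxy
  rcases Subgraph.sup_adj.1 hxy with hxy | hxy
  · rw [subgraphOfAdj_adj, Sym2.eq_iff] at hxy
    rcases hxy with ⟨rfl, rfl⟩ | ⟨rfl, rfl⟩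
    · exact absurd hxp hap
    · exact absurd hyX (hc hx)
  · exact hS.2 hx (inducedOn_adj.2 ⟨hxX, hyX, hxy⟩)

end SimpleGraph.Walk

section SaturatedPath

open Walk

variable {M : Set (Sym2 V)} {X : Set V} {a b c d : V}

lemma not_isSaturatedPath_nil : ¬ IsSaturatedPath M (nil : G.Walk a a) := fun hp => by
  simpa using hp.2.1

lemma IsSaturatedPath.mem_of_cons {h : G.Adj a c} {p : G.Walk c b}
    (hp : IsSaturatedPath M (cons h p)) : s(a, c) ∈ M :=
  hp.2.2.2 _ rfl

lemma isSaturatedPath_cons_nil (h : G.Adj a c) (hac : s(a, c) ∈ M) :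
    IsSaturatedPath M (cons h nil) :=
  ⟨by simp [h.ne], by simp, List.isChain_singleton _, by simpa using hac⟩

lemma isAltWalk_iff {u v : V} {p : G.Walk u v} :
    IsAltWalk M p ↔ p.edges.IsChain (fun e f => e ∈ M ↔ f ∉ M) :=
  Iff.rfl

lemma isSaturatedPath_cons_cons_iff {h : G.Adj a c} {h' : G.Adj c d} {p : G.Walk d b} :
    IsSaturatedPath M (cons h (cons h' p)) ↔
      (cons h (cons h' p)).IsPath ∧ s(a, c) ∈ M ∧ s(c, d) ∉ M ∧ IsSaturatedPath M p := by
  have hodd : Odd (cons h (cons h' p)).length ↔ Odd p.length := by simp [parity_simps]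
  have hpath : (cons h (cons h' p)).IsPath → p.IsPath := fun hp => hp.of_cons.of_cons
  simp only [IsSaturatedPath, isAltWalk_iff, edges_cons, List.isChain_cons_cons, hodd,
    List.head?_cons, Option.some.injEq, forall_eq']
  rcases p.edges with _ | ⟨e, es⟩
  · simp only [List.isChain_singleton, List.isChain_nil, List.head?_nil, reduceCtorEq,
      false_implies, implies_true, and_true]
    tauto
  · simp only [List.isChain_cons_cons, List.head?_cons, Option.some.injEq, forall_eq']
    tauto

lemma IsSaturatedPath.exists_isAdjClosed_of_start_mem (hM : IsPerfectMatchingSet G M)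
    (hX : IsSeparating G X) :
    ∀ {a b : V} {p : G.Walk a b}, IsSaturatedPath M p → a ∈ X →
      ∃ (y : V) (q : G.Walk a y), IsSaturatedPath M q ∧ q.toSubgraph.IsAdjClosed (p.inducedOn X)
  | _, _, nil, hp, _ => absurd hp not_isSaturatedPath_nil
  | _, _, cons h nil, hp, ha => by
    have hc := (hX.mem_iff_of_mem_allowedEdges ⟨M, hM, hp.mem_of_cons⟩).1 ha
    exact ⟨_, _, hp, isAdjClosed_cons h (isAdjClosed_nil _ hc (start_mem_support _) (by simp)) ha
      (by simp [h.ne])⟩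
  | a, _, cons (v := c) h (cons (v := d) h' p), hp, ha => by
    obtain ⟨hpath, hac, hcd, hp'⟩ := isSaturatedPath_cons_cons_iff.1 hp
    have hc := (hX.mem_iff_of_mem_allowedEdges ⟨M, hM, hac⟩).1 ha
    have hap : a ∉ (cons h' p).support := ((cons_isPath_iff _ _).1 hpath).2
    have hcp : c ∉ p.support := ((cons_isPath_iff _ _).1 hpath.of_cons).2
    by_cases hd : d ∈ X
    · obtain ⟨y, q, hq, hqp⟩ := hp'.exists_isAdjClosed_of_start_mem hM hX hd
      have hqp' := isAdjClosed_cons h' hqp hc hcp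
      refine ⟨y, cons h (cons h' q), isSaturatedPath_cons_cons_iff.2 ⟨?_, hac, hcd, hq⟩,
        isAdjClosed_cons h hqp' ha hap⟩
      exact hpath.cons_of_support_subset
        (hpath.of_cons.cons_of_support_subset hq.1 (support_subset_of_le_inducedOn hqp.1))
        (support_subset_of_le_inducedOn hqp'.1)
    · refine ⟨c, cons h nil, isSaturatedPath_cons_nil h hac,
        isAdjClosed_cons h (isAdjClosed_nil _ hc (start_mem_support _) fun v hv => ?_) ha hap⟩
      have hv : v ∈ (cons h' p).toSubgraph.neighborSet c := hv
      rw [hpath.of_cons.neighborSet_toSubgraph_startpoint not_nil_cons] at hv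
      rwa [Set.mem_singleton_iff.1 hv, snd_cons]

lemma IsSaturatedPath.exists_isAdjClosed_of_reachIn (hM : IsPerfectMatchingSet G M)
    (hX : IsSeparating G X) {a b w : V} {p : G.Walk a b} (hp : IsSaturatedPath M p)
    (haw : ReachIn (p.inducedOn X) a w) :
    ∃ (x y : V) (q : G.Walk x y), IsSaturatedPath M q ∧ w ∈ q.support ∧
      q.toSubgraph.IsAdjClosed (p.inducedOn X) := by
  obtain ⟨y, q, hq, hqp⟩ :=
    hp.exists_isAdjClosed_of_start_mem hM hX (mem_inducedOn_verts.1 haw.1).1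
  exact ⟨a, y, q, hq,
    q.mem_verts_toSubgraph.1 (hqp.mem_of_reachIn q.start_mem_verts_toSubgraph haw), hqp⟩

lemma IsSaturatedPath.exists_isAdjClosed_of_mem (hM : IsPerfectMatchingSet G M)
    (hX : IsSeparating G X) :
    ∀ {a b : V} {p : G.Walk a b}, IsSaturatedPath M p → ∀ {w : V}, w ∈ (p.inducedOn X).verts →
      ∃ (x y : V) (q : G.Walk x y), IsSaturatedPath M q ∧ w ∈ q.support ∧
        q.toSubgraph.IsAdjClosed (p.inducedOn X)
  | _, _, nil, hp, _, _ => absurd hp not_isSaturatedPath_nil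
  | a, _, cons (v := c) h nil, hp, w, hw => by
    obtain ⟨hwX, hw⟩ := mem_inducedOn_verts.1 hw
    have hac := hX.mem_iff_of_mem_allowedEdges ⟨M, hM, hp.mem_of_cons⟩
    refine hp.exists_isAdjClosed_of_reachIn hM hX ?_
    rcases (by simpa using hw : w = a ∨ w = c) with rfl | rfl
    · exact ReachIn.refl (mem_inducedOn_verts.2 ⟨hwX, start_mem_support _⟩)
    · exact reachIn_inducedOn_cons h _ (hac.2 hwX) hwX
  | a, _, cons (v := c) h (cons (v := d) h' p), hp, w, hw => by
    by_cases haw : ReachIn ((cons h (cons h' p)).inducedOn X) a w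
    · exact hp.exists_isAdjClosed_of_reachIn hM hX haw
    obtain ⟨hpath, hac, -, hp'⟩ := isSaturatedPath_cons_cons_iff.1 hp
    have hacX := hX.mem_iff_of_mem_allowedEdges ⟨M, hM, hac⟩
    have hap : a ∉ (cons h' p).support := ((cons_isPath_iff _ _).1 hpath).2
    have hcp : c ∉ p.support := ((cons_isPath_iff _ _).1 hpath.of_cons).2
    obtain ⟨hwX, hw⟩ := mem_inducedOn_verts.1 hw
    have hwp : w ∈ p.support := by
      rcases (by simpa using hw : w = a ∨ w = c ∨ w ∈ p.support) with rfl | rfl | hwp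
      · exact absurd (ReachIn.refl (mem_inducedOn_verts.2 ⟨hwX, start_mem_support _⟩)) haw
      · exact absurd (reachIn_inducedOn_cons h _ (hacX.2 hwX) hwX) haw
      · exact hwp
    obtain ⟨x, y, q, hq, hwq, hqp⟩ :=
      hp'.exists_isAdjClosed_of_mem hM hX (mem_inducedOn_verts.2 ⟨hwX, hwp⟩)
    refine ⟨x, y, q, hq, hwq, (hqp.of_cons h' hcp fun hd hc => haw ?_).of_cons h hap fun hc => ?_⟩
    · have hdw : ReachIn (p.inducedOn X) d w := (q.toSubgraph_connected.reachIn hd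
        (q.mem_verts_toSubgraph.2 hwq)).mono hqp.1
      have had : ReachIn ((cons h (cons h' p)).inducedOn X) a d :=
        (reachIn_inducedOn_cons h _ (hacX.2 hc) hc).trans
          ((reachIn_inducedOn_cons h' p hc (mem_inducedOn_verts.1 hdw.1).1).mono
            (inducedOn_le_cons h _))
      exact had.trans ((hdw.mono (inducedOn_le_cons h' p)).mono (inducedOn_le_cons h _))
    · exact absurd (support_subset_of_le_inducedOn hqp.1 (q.mem_verts_toSubgraph.1 hc)) hcp

end SaturatedPath

theorem stmt15_general (G : SimpleGraph V) (M : Set (Sym2 V))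
    (hM : IsPerfectMatchingSet G M) (X : Set V) (hX : IsSeparating G X)
    {a b : V} (p : G.Walk a b) (hp : IsSaturatedPath M p) :
    ∀ w ∈ (p.toSubgraph.induce (X ∩ p.toSubgraph.verts)).verts,
      ∃ (x y : V) (q : G.Walk x y), IsSaturatedPath M q ∧
        q.toSubgraph = compSub (p.toSubgraph.induce (X ∩ p.toSubgraph.verts)) w := by
  intro w hw
  obtain ⟨x, y, q, hq, hwq, hqp⟩ := hp.exists_isAdjClosed_of_mem hM hX hw
  exact ⟨x, y, q, hq,
    (compSub_eq_of_isAdjClosed hqp q.toSubgraph_connected (q.mem_verts_toSubgraph.2 hwq)).symm⟩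

theorem stmt15 [Finite V] (G : SimpleGraph V) (M : Set (Sym2 V))
    (hM : IsPerfectMatchingSet G M) (X : Set V) (hX : IsSeparating G X)
    {a b : V} (p : G.Walk a b) (hp : IsSaturatedPath M p) :
    ∀ w ∈ (p.toSubgraph.induce (X ∩ p.toSubgraph.verts)).verts,
      ∃ (x y : V) (q : G.Walk x y), IsSaturatedPath M q ∧
        q.toSubgraph = compSub (p.toSubgraph.induce (X ∩ p.toSubgraph.verts)) w :=
  stmt15_general G M hM X hX p hp
end

section
/- Let G₀ be a saturated elementary graph with canonical partition P(G₀), and let {G_S}_{S ∈ P(G₀)} be a family of saturated graphs (some possibly empty), vertex-disjoint from G₀ and from each other. Let G be the graph obtained from the disjoint union of G₀ and all G_S by joining every vertex of S to every vertex of G_S, for each S ∈ P(G₀). Then the graph G' := G / V(G₀) obtained by contracting V(G₀) to a single vertex is factor-critical. -/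
open SimpleGraph

variable {V : Type*}

/-- A graph is elementary: factorizable with all vertices in one factor-connected component. -/
def Elementary (G : SimpleGraph V) : Prop :=
  Factorizable G ∧ ∀ u v : V, SameFC G u v

/-- A graph is factor-critical if deleting any vertex leaves a factorizable graph. -/
def FactorCritical (G : SimpleGraph V) : Prop :=
  ∀ w : V, Factorizable (G.induce ({w}ᶜ : Set V))

/-- Kotzig's canonical relation on the induced (elementary) subgraph `G[B]`:
`a ∼ b` iff `a, b ∈ B` and (`a = b` or `G[B] - a - b` is not factorizable). -/
def CanonRelIn (G : SimpleGraph V) (B : Set V) (a b : V) : Prop :=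
  a ∈ B ∧ b ∈ B ∧ (a = b ∨ ¬ Factorizable (G.induce (B \ {a, b})))

/-- `S` is a class of Kotzig's canonical partition of `G[B]`. -/
def CanonClassIn (G : SimpleGraph V) (B : Set V) (S : Set V) : Prop :=
  ∃ b ∈ B, S = {b' | CanonRelIn G B b b'}

/-- Representatives of a vertex of the contraction `G / B`. -/
def ContractRep (B : Set V) : Option ↥(Bᶜ : Set V) → V → Prop
  | none, u => u ∈ B
  | some w, u => u = (w : V)

/-- The contraction `G / B` of the vertex set `B` to a single vertex. -/
def contractSet (G : SimpleGraph V) (B : Set V) : SimpleGraph (Option ↥(Bᶜ : Set V)) where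
  Adj x y := x ≠ y ∧ ∃ u v, ContractRep B x u ∧ ContractRep B y v ∧ G.Adj u v
  symm := by
    constructor
    rintro x y ⟨hxy, u, v, hu, hv, h⟩
    exact ⟨hxy.symm, v, u, hv, hu, h.symm⟩
  loopless := by constructor; rintro x ⟨h, -⟩; exact h rfl

/-- `N` is a perfect matching of the induced subgraph `G[s]`, given as edges of `G`. -/
def PMon (G : SimpleGraph V) (s : Set V) (N : Set (Sym2 V)) : Prop :=
  N ⊆ G.edgeSet ∧ (∀ e ∈ N, ∀ a : V, a ∈ e → a ∈ s) ∧ ∀ v ∈ s, ∃! e, e ∈ N ∧ v ∈ e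

/-! Each `G_S` is factorizable and the `G_S` partition `V(G) \ V(G₀)`, so their perfect matchings
combine into one of `G - V(G₀)`, that is, of `G'` minus the contracted vertex `c`. Every class `S`
is nonempty and joined to all of `G_S`, so `c` is adjacent to every other vertex of `G'`. Hence for
`w ≠ c` with mate `w'`, replacing the edge `ww'` by `w'c` gives a perfect matching of `G' - w`. -/

open Function

section Partner

variable {W : Type*}

/-- `p` is the mate function of a perfect matching of `G[t]`. -/
def IsPartnerOn (G : SimpleGraph W) (t : Set W) (p : W → W) : Prop :=
  Set.MapsTo p t t ∧ Set.LeftInvOn p p t ∧ ∀ v ∈ t, G.Adj v (p v)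

theorem factorizable_induce_iff_exists_isPartnerOn {G : SimpleGraph W} {t : Set W} :
    Factorizable (G.induce t) ↔ ∃ p, IsPartnerOn G t p := by
  constructor
  · rintro ⟨M, hsub, hM⟩
    have hmate : ∀ v : t, ∃ w : t, s(v, w) ∈ M := fun v => by
      obtain ⟨e, ⟨he, hv⟩, -⟩ := hM v
      exact ⟨Sym2.Mem.other hv, (Sym2.other_spec hv).symm ▸ he⟩
    choose q hq using hmate
    have hadj : ∀ v, (G.induce t).Adj v (q v) := fun v => hsub (hq v)
    have hqq : ∀ v, q (q v) = v := fun v => by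
      have h := (hM (q v)).unique ⟨hq (q v), Sym2.mem_mk_left _ _⟩
        ⟨hq v, Sym2.mem_mk_right _ _⟩
      rcases Sym2.eq_iff.mp h with ⟨h1, -⟩ | ⟨-, h2⟩
      · exact absurd h1.symm (hadj v).ne
      · exact h2
    have hext : ∀ v : t, Function.extend Subtype.val (fun v => (q v : W)) id v = q v :=
      Subtype.val_injective.extend_apply _ _
    refine ⟨Function.extend Subtype.val (fun v => (q v : W)) id, ?_, ?_, ?_⟩
    · intro v hv
      simpa only [hext ⟨v, hv⟩] using (q ⟨v, hv⟩).2
    · intro v hv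
      simp only [hext ⟨v, hv⟩, hext (q ⟨v, hv⟩), hqq]
    · intro v hv
      rw [hext ⟨v, hv⟩]
      exact hadj ⟨v, hv⟩
  · rintro ⟨p, hmaps, hinv, hadj⟩
    set r := hmaps.restrict p t t
    refine ⟨Set.range fun v => s(v, r v), ?_, fun v => ?_⟩
    · rintro _ ⟨v, rfl⟩
      exact hadj v v.2
    refine ⟨s(v, r v), ⟨⟨v, rfl⟩, Sym2.mem_mk_left _ _⟩, ?_⟩
    rintro _ ⟨⟨u, rfl⟩, hv⟩
    rcases Sym2.mem_iff.mp hv with rfl | rfl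
    · rfl
    · rw [show r (r u) = u from Subtype.ext (hinv u.2), Sym2.eq_swap]

variable {G : SimpleGraph W}

theorem factorizable_induce_iUnion {ι : Type*} {T : ι → Set W}
    (hdisj : Pairwise (Disjoint on T)) (hT : ∀ i, Factorizable (G.induce (T i))) :
    Factorizable (G.induce (⋃ i, T i)) := by
  classical
  choose p hp using fun i => factorizable_induce_iff_exists_isPartnerOn.mp (hT i)
  let P : W → W := fun v => if h : ∃ i, v ∈ T i then p h.choose v else v
  have hP : ∀ i, ∀ v ∈ T i, P v = p i v := fun i v hv => by
    have h : ∃ i, v ∈ T i := ⟨i, hv⟩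
    have hi : h.choose = i := by
      by_contra hne
      exact Set.disjoint_left.mp (hdisj hne) h.choose_spec hv
    simp only [P, dif_pos h, hi]
  refine factorizable_induce_iff_exists_isPartnerOn.mpr ⟨P, ?_, ?_, ?_⟩ <;>
    intro v hv <;> obtain ⟨i, hvi⟩ := Set.mem_iUnion.mp hv
  · exact Set.mem_iUnion.mpr ⟨i, hP i v hvi ▸ (hp i).1 hvi⟩
  · rw [hP i v hvi, hP i _ ((hp i).1 hvi), (hp i).2.1 hvi]
  · exact hP i v hvi ▸ (hp i).2.2 v hvi

theorem factorCritical_of_forall_adj_of_factorizable (c : W) (hc : ∀ w ≠ c, G.Adj c w)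
    (h : Factorizable (G.induce {c}ᶜ)) : FactorCritical G := by
  classical
  intro w
  rcases eq_or_ne w c with rfl | hw
  · exact h
  obtain ⟨p, hmaps, hinv, hadj⟩ := factorizable_induce_iff_exists_isPartnerOn.mp h
  have hpc : ∀ x ≠ c, p x ≠ c := fun x hx => hmaps hx
  have hpx : ∀ x ≠ c, p (p x) = x := fun x hx => hinv hx
  have hpw : p w ≠ w := (hadj w hw).ne.symm
  -- `c` takes over the mate `p w` of the deleted vertex `w`.
  refine factorizable_induce_iff_exists_isPartnerOn.mpr
    ⟨fun x => if x = c then p w else if x = p w then c else p x, ?_, ?_, ?_⟩ <;>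
    intro x (hx : x ≠ w)
  · by_cases hxc : x = c
    · simpa [hxc] using hpw
    by_cases hxp : x = p w
    · simpa [hxp, hpc w hw] using hw.symm
    simp only [hxc, hxp, if_false, Set.mem_compl_singleton_iff]
    exact fun h => hxp (by rw [← h, hpx x hxc])
  · by_cases hxc : x = c
    · simp [hxc, hpc w hw]
    by_cases hxp : x = p w
    · simp [hxp, hpc w hw]
    have hne : p x ≠ p w := fun h => hx (by rw [← hpx x hxc, h, hpx w hw])
    simp [hxc, hxp, hpc x hxc, hne, hpx x hxc]
  · by_cases hxc : x = c
    · simpa [hxc] using hc _ (hpc w hw)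
    by_cases hxp : x = p w
    · simpa [hxp, hpc w hw] using (hc _ (hpc w hw)).symm
    simpa [hxc, hxp] using hadj x hxc

end Partner

section Contraction

variable {G : SimpleGraph V} {B : Set V}

theorem contractSet_adj_none_some {w : ↥(Bᶜ : Set V)} :
    (contractSet G B).Adj none (some w) ↔ ∃ b ∈ B, G.Adj b w := by
  simp [contractSet, ContractRep]

theorem factorizable_contractSet_induce_compl_none (h : Factorizable (G.induce Bᶜ)) :
    Factorizable ((contractSet G B).induce {none}ᶜ) := by
  obtain ⟨p, hmaps, hinv, hadj⟩ := factorizable_induce_iff_exists_isPartnerOn.mp h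
  refine factorizable_induce_iff_exists_isPartnerOn.mpr
    ⟨Option.map (hmaps.restrict p Bᶜ Bᶜ), ?_, ?_, ?_⟩ <;> rintro (_ | u) hu <;>
    try exact absurd rfl hu
  · simp
  · simp only [Option.map_some]
    exact congrArg some (Subtype.ext (hinv u.2))
  · exact ⟨fun h => (hadj u u.2).ne (congrArg Subtype.val (Option.some.inj h)),
      u, p u, rfl, rfl, hadj u u.2⟩

end Contraction

theorem stmt16_general (G : SimpleGraph V) (B : Set V) (T : Set V → Set V)
    (hTsub : ∀ S, CanonClassIn G B S → T S ⊆ (Bᶜ : Set V))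
    (hTdis : ∀ S S', CanonClassIn G B S → CanonClassIn G B S' → S ≠ S' →
      Disjoint (T S) (T S'))
    (hTcover : ∀ w ∈ (Bᶜ : Set V), ∃ S, CanonClassIn G B S ∧ w ∈ T S)
    (hTsat : ∀ S, CanonClassIn G B S → Saturated (G.induce (T S)))
    (hjoin : ∀ S, CanonClassIn G B S → ∀ a ∈ S, ∀ b ∈ T S, G.Adj a b) :
    FactorCritical (contractSet G B) := by
  have hcompl : Bᶜ = ⋃ S : {S // CanonClassIn G B S}, T S :=
    Set.Subset.antisymm
      (fun w hw => let ⟨S, hS, hwS⟩ := hTcover w hw; Set.mem_iUnion.mpr ⟨⟨S, hS⟩, hwS⟩)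
      (Set.iUnion_subset fun S => hTsub S.1 S.2)
  have hfact : Factorizable (G.induce Bᶜ) := hcompl ▸ factorizable_induce_iUnion
    (fun S S' hne => hTdis _ _ S.2 S'.2 (Subtype.coe_injective.ne hne))
    (fun S => (hTsat S.1 S.2).1)
  refine factorCritical_of_forall_adj_of_factorizable none ?_
    (factorizable_contractSet_induce_compl_none hfact)
  rintro (_ | w) hw
  · exact absurd rfl hw
  obtain ⟨S, ⟨b, hb, rfl⟩, hwS⟩ := hTcover w w.2
  exact contractSet_adj_none_some.mpr
    ⟨b, hb, hjoin _ ⟨b, hb, rfl⟩ b ⟨hb, hb, Or.inl rfl⟩ w hwS⟩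

theorem stmt16 [Finite V] (G : SimpleGraph V) (B : Set V) (T : Set V → Set V)
    (hBsat : Saturated (G.induce B)) (hBelem : Elementary (G.induce B))
    (hTsub : ∀ S, CanonClassIn G B S → T S ⊆ (Bᶜ : Set V))
    (hTdis : ∀ S S', CanonClassIn G B S → CanonClassIn G B S' → S ≠ S' →
      Disjoint (T S) (T S'))
    (hTcover : ∀ w ∈ (Bᶜ : Set V), ∃ S, CanonClassIn G B S ∧ w ∈ T S)
    (hTsat : ∀ S, CanonClassIn G B S → Saturated (G.induce (T S)))
    (hjoin : ∀ S, CanonClassIn G B S → ∀ a ∈ S, ∀ b ∈ T S, G.Adj a b)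
    (hedges : ∀ a b : V, G.Adj a b → (a ∈ B ∧ b ∈ B) ∨
      ∃ S, CanonClassIn G B S ∧
        ((a ∈ T S ∧ b ∈ T S) ∨ (a ∈ S ∧ b ∈ T S) ∨ (a ∈ T S ∧ b ∈ S))) :
    FactorCritical (contractSet G B) :=
  stmt16_general G B T hTsub hTdis hTcover hTsat hjoin
end

section
/- Let G₀ be a saturated elementary graph and {G_S}_{S ∈ P(G₀)} a family of saturated graphs. Then the graph G obtained by the cathedral construction—joining every vertex of S to every vertex of G_S for each class S of the canonical partition P(G₀)—is saturated. -/
open SimpleGraph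

variable {V : Type*}

/-!
`G` is saturated as soon as it is factorizable and `G - x - y` is factorizable for every
non-adjacent pair `x ≠ y`: a perfect matching of `G - x - y` plus the new edge `xy` is a perfect
matching of `G + xy` that `G` does not have. Such matchings are assembled from perfect matchings
of `G[B]`, of the towers `T S`, and of `G[B] - x - y` or `G[T S] - x - y` (saturation), except
when `x` and `y` lie in different parts. There one uses an exchange: a vertex `a ∈ S`, being
joined to all of `T S`, can replace any vertex of `T S` in a perfect matching of `G[T S]`.
If `x ∈ B` and `y ∈ T S`, then `x ∉ S`, so for `s ∈ S` the graph `G[B] - s - x` is factorizable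
by definition of Kotzig's relation, and `s` replaces `y`. If `x ∈ T S` and `y ∈ T S'` with
`S ≠ S'`, pick (up to symmetry) `a ∈ S \ S'`: `a` replaces `x` in `T S`, which reduces to the
previous case with `a` in place of `x`.
-/

namespace PMon

variable {W : Type*} {G G' : SimpleGraph V} {s t : Set V} {N N' : Set (Sym2 V)} {a b v : V}

theorem mono (h : G ≤ G') (hN : PMon G s N) : PMon G' s N :=
  ⟨fun _ he => SimpleGraph.edgeSet_mono h (hN.1 he), hN.2.1, hN.2.2⟩

theorem of_subset_edgeSet (hN : PMon G' s N) (hNG : N ⊆ G.edgeSet) : PMon G s N :=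
  ⟨hNG, hN.2.1, hN.2.2⟩

theorem pair (h : G.Adj a b) : PMon G {a, b} {s(a, b)} := by
  refine ⟨by simpa using h, ?_, fun v hv => ⟨s(a, b), ⟨rfl, ?_⟩, fun e he => he.1⟩⟩
  · rintro e rfl c hc
    simpa using hc
  · simpa using hv

theorem union (hst : Disjoint s t) (hN : PMon G s N) (hN' : PMon G t N') :
    PMon G (s ∪ t) (N ∪ N') := by
  refine ⟨Set.union_subset hN.1 hN'.1, ?_, ?_⟩
  · rintro e (he | he) a ha
    exacts [Or.inl (hN.2.1 e he a ha), Or.inr (hN'.2.1 e he a ha)]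
  · rintro v (hv | hv)
    · obtain ⟨e, he, huniq⟩ := hN.2.2 v hv
      refine ⟨e, ⟨Or.inl he.1, he.2⟩, ?_⟩
      rintro f ⟨hf | hf, hvf⟩
      · exact huniq f ⟨hf, hvf⟩
      · exact (Set.disjoint_left.1 hst hv (hN'.2.1 f hf v hvf)).elim
    · obtain ⟨e, he, huniq⟩ := hN'.2.2 v hv
      refine ⟨e, ⟨Or.inr he.1, he.2⟩, ?_⟩
      rintro f ⟨hf | hf, hvf⟩
      · exact (Set.disjoint_right.1 hst hv (hN.2.1 f hf v hvf)).elim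
      · exact huniq f ⟨hf, hvf⟩

theorem iUnion {ι : Type*} {s : ι → Set V} {N : ι → Set (Sym2 V)}
    (hs : Pairwise fun i j => Disjoint (s i) (s j)) (hN : ∀ i, PMon G (s i) (N i)) :
    PMon G (⋃ i, s i) (⋃ i, N i) := by
  refine ⟨Set.iUnion_subset fun i => (hN i).1, ?_, ?_⟩
  · intro e he a ha
    obtain ⟨i, he⟩ := Set.mem_iUnion.1 he
    exact Set.mem_iUnion.2 ⟨i, (hN i).2.1 e he a ha⟩
  · intro v hv
    obtain ⟨i, hv⟩ := Set.mem_iUnion.1 hv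
    obtain ⟨e, he, huniq⟩ := (hN i).2.2 v hv
    refine ⟨e, ⟨Set.mem_iUnion.2 ⟨i, he.1⟩, he.2⟩, ?_⟩
    rintro f ⟨hf, hvf⟩
    obtain ⟨j, hf⟩ := Set.mem_iUnion.1 hf
    obtain rfl : i = j := by
      by_contra hij
      exact Set.disjoint_left.1 (hs hij) hv ((hN j).2.1 f hf v hvf)
    exact huniq f ⟨hf, hvf⟩

theorem exists_partner (h : PMon G s N) (hv : v ∈ s) : ∃ t ∈ s, s(v, t) ∈ N := by
  obtain ⟨e, ⟨he, hve⟩, -⟩ := h.2.2 v hv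
  refine ⟨Sym2.Mem.other hve, h.2.1 e he _ (Sym2.other_mem hve), ?_⟩
  rwa [Sym2.other_spec hve]

theorem diff_pair (h : PMon G s N) (he : s(a, b) ∈ N) :
    PMon G (s \ {a, b}) (N \ {s(a, b)}) := by
  refine ⟨fun f hf => h.1 hf.1, ?_, ?_⟩
  · rintro f ⟨hf, hfe⟩ c hc
    refine ⟨h.2.1 f hf c hc, fun hcab => hfe ?_⟩
    obtain ⟨g, -, huniq⟩ := h.2.2 c (h.2.1 f hf c hc)
    rw [Set.mem_singleton_iff, huniq f ⟨hf, hc⟩, huniq _ ⟨he, by simpa using hcab⟩]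
  · rintro v ⟨hv, hvab⟩
    obtain ⟨f, ⟨hf, hvf⟩, huniq⟩ := h.2.2 v hv
    refine ⟨f, ⟨⟨hf, ?_⟩, hvf⟩, fun g hg => huniq g ⟨hg.1.1, hg.2⟩⟩
    rintro rfl
    exact hvab (by simpa using hvf)

theorem exists_insert_diff (h : PMon G s N) (hv : v ∈ s) (ha : a ∉ s)
    (hadj : ∀ w ∈ s, G.Adj a w) : ∃ N', PMon G (insert a (s \ {v})) N' := by
  obtain ⟨t, ht, hvt⟩ := h.exists_partner hv
  have htv : t ≠ v := (G.ne_of_adj (h.1 hvt)).symm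
  have hset : {a, t} ∪ s \ {v, t} = insert a (s \ {v}) := by
    ext w
    simp only [Set.mem_union, Set.mem_insert_iff, Set.mem_singleton_iff, Set.mem_sdiff]
    grind
  have hdisj : Disjoint {a, t} (s \ {v, t}) := by
    simp only [Set.disjoint_insert_left, Set.disjoint_singleton_left, Set.mem_sdiff,
      Set.mem_insert_iff, Set.mem_singleton_iff]
    grind
  exact ⟨_, hset ▸ (pair (hadj t ht)).union hdisj (h.diff_pair hvt)⟩

theorem map {H : SimpleGraph W} {s : Set W} {N : Set (Sym2 W)} (f : H ↪g G) (h : PMon H s N) :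
    PMon G (f '' s) (Sym2.map f '' N) := by
  refine ⟨?_, ?_, ?_⟩
  · rintro _ ⟨e, he, rfl⟩
    exact f.toHom.map_mem_edgeSet (h.1 he)
  · rintro _ ⟨e, he, rfl⟩ c hc
    obtain ⟨b, hb, rfl⟩ := Sym2.mem_map.1 hc
    exact ⟨b, h.2.1 e he b hb, rfl⟩
  · rintro _ ⟨w, hw, rfl⟩
    obtain ⟨e, ⟨he, hwe⟩, huniq⟩ := h.2.2 w hw
    refine ⟨Sym2.map f e, ⟨⟨e, he, rfl⟩, Sym2.mem_map.2 ⟨w, hwe, rfl⟩⟩, ?_⟩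
    rintro _ ⟨⟨g, hg, rfl⟩, hwg⟩
    obtain ⟨b, hb, hbw⟩ := Sym2.mem_map.1 hwg
    rw [huniq g ⟨hg, f.injective hbw ▸ hb⟩]

theorem univ_iff : PMon G Set.univ N ↔ IsPerfectMatchingSet G N :=
  ⟨fun h => ⟨h.1, fun v => h.2.2 v (Set.mem_univ v)⟩,
    fun h => ⟨h.1, fun _ _ _ _ => Set.mem_univ _, fun v _ => h.2 v⟩⟩

end PMon

section Saturation

variable {W : Type*} {G : SimpleGraph V} {s : Set V} {x y : V}

theorem SimpleGraph.Embedding.coe_induce : ⇑(Embedding.induce (G := G) s) = Subtype.val := rfl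

theorem Factorizable.exists_pmon (h : Factorizable (G.induce s)) : ∃ N, PMon G s N := by
  obtain ⟨M, hM⟩ := h
  have h := (PMon.univ_iff.2 hM).map (Embedding.induce s)
  rw [Set.image_univ, Embedding.coe_induce, Subtype.range_coe] at h
  exact ⟨_, h⟩

theorem subset_edgeSet_of_subset_edgeSet_sup {H : SimpleGraph W} {e : Sym2 W} {N : Set (Sym2 W)}
    (hN : N ⊆ (H ⊔ fromEdgeSet {e}).edgeSet) (he : e ∉ N) : N ⊆ H.edgeSet := by
  intro f hf
  rcases (edgeSet_sup .. ▸ hN hf) with hf' | hf'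
  · exact hf'
  · rw [edgeSet_fromEdgeSet] at hf'
    exact (he (hf'.1 ▸ hf)).elim

theorem exists_isPerfectMatchingSet_mem_of_ncard_lt [Finite W] {H : SimpleGraph W}
    {e : Sym2 W}
    (h : {N | IsPerfectMatchingSet H N}.ncard <
      {N | IsPerfectMatchingSet (H ⊔ fromEdgeSet {e}) N}.ncard) :
    ∃ N, IsPerfectMatchingSet (H ⊔ fromEdgeSet {e}) N ∧ e ∈ N := by
  by_contra! hc
  refine (Set.ncard_le_ncard (fun N hN => ?_) (Set.toFinite _)).not_gt h
  exact ⟨subset_edgeSet_of_subset_edgeSet_sup hN.1 (hc N hN), hN.2⟩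

theorem ncard_lt_of_isPerfectMatchingSet_mem [Finite W] {H : SimpleGraph W} {e : Sym2 W}
    (he : e ∉ H.edgeSet) {N : Set (Sym2 W)}
    (hN : IsPerfectMatchingSet (H ⊔ fromEdgeSet {e}) N) (heN : e ∈ N) :
    {N | IsPerfectMatchingSet H N}.ncard <
      {N | IsPerfectMatchingSet (H ⊔ fromEdgeSet {e}) N}.ncard := by
  refine Set.ncard_lt_ncard ⟨fun M hM => ⟨?_, hM.2⟩, fun hsub => he ((hsub hN).1 heN)⟩
    (Set.toFinite _)
  exact hM.1.trans (edgeSet_mono le_sup_left)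

theorem Saturated.exists_pmon_diff_pair [Finite V] (hs : Saturated (G.induce s)) (hx : x ∈ s)
    (hy : y ∈ s) (hxy : x ≠ y) (hadj : ¬ G.Adj x y) : ∃ N, PMon G (s \ {x, y}) N := by
  obtain ⟨M, hM, heM⟩ := exists_isPerfectMatchingSet_mem_of_ncard_lt
    (hs.2 ⟨x, hx⟩ ⟨y, hy⟩ (fun h => hxy (congrArg Subtype.val h)) hadj)
  have hM' := ((PMon.univ_iff.2 hM).diff_pair heM).of_subset_edgeSet
    (subset_edgeSet_of_subset_edgeSet_sup (Set.sdiff_subset.trans hM.1) (fun h => h.2 rfl))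
  have h := hM'.map (Embedding.induce s)
  rw [Embedding.coe_induce, Set.image_sdiff Subtype.val_injective, Set.image_univ,
    Subtype.range_coe, Set.image_pair] at h
  exact ⟨_, h⟩

theorem saturated_of_forall_exists_pmon_compl_pair [Finite V] (hG : Factorizable G)
    (h : ∀ x y, x ≠ y → ¬ G.Adj x y → ∃ N, PMon G {x, y}ᶜ N) : Saturated G := by
  refine ⟨hG, fun x y hxy hadj => ?_⟩
  obtain ⟨N, hN⟩ := h x y hxy hadj
  have hxy' : (G ⊔ fromEdgeSet {s(x, y)}).Adj x y := Or.inr ⟨rfl, hxy⟩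
  have hM := (PMon.pair hxy').union disjoint_compl_right (hN.mono le_sup_left)
  rw [Set.union_compl_self, PMon.univ_iff] at hM
  exact ncard_lt_of_isPerfectMatchingSet_mem hadj hM (Or.inl rfl)

end Saturation

section Cathedral

variable {G : SimpleGraph V} {B S : Set V}

theorem CanonClassIn.subset (hS : CanonClassIn G B S) : S ⊆ B := by
  obtain ⟨b, -, rfl⟩ := hS
  exact fun _ ha => ha.2.1

theorem CanonClassIn.exists_factorizable_diff_pair (hS : CanonClassIn G B S) :
    ∃ s ∈ S, ∀ a ∈ B, a ∉ S → Factorizable (G.induce (B \ {s, a})) := by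
  obtain ⟨b, hb, rfl⟩ := hS
  exact ⟨b, ⟨hb, hb, Or.inl rfl⟩, fun a ha haS => of_not_not fun h => haS ⟨hb, ha, Or.inr h⟩⟩

structure CathedralTowers (G : SimpleGraph V) (B : Set V) (T : Set V → Set V) : Prop where
  subset_compl : ∀ S, CanonClassIn G B S → T S ⊆ Bᶜ
  disjoint : ∀ S S', CanonClassIn G B S → CanonClassIn G B S' → S ≠ S' → Disjoint (T S) (T S')
  cover : ∀ w ∈ Bᶜ, ∃ S, CanonClassIn G B S ∧ w ∈ T S
  factorizable_induce : ∀ S, CanonClassIn G B S → Factorizable (G.induce (T S))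
  adj : ∀ S, CanonClassIn G B S → ∀ a ∈ S, ∀ b ∈ T S, G.Adj a b

namespace CathedralTowers

variable {T : Set V → Set V} {S' U : Set V} {a x y : V} (hT : CathedralTowers G B T)
include hT

theorem subset_or_disjoint (hS : CanonClassIn G B S) (hS' : CanonClassIn G B S') :
    T S' ⊆ T S ∨ Disjoint (T S') (T S) := by
  by_cases h : S' = S
  · exact Or.inl (h ▸ subset_rfl)
  · exact Or.inr (hT.disjoint S' S hS' hS h)

theorem exists_pmon_compl (hU : ∀ S, CanonClassIn G B S → T S ⊆ U ∨ Disjoint (T S) U) :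
    ∃ N, PMon G (Bᶜ \ U) N := by
  choose! N hN using fun S (hS : CanonClassIn G B S) => (hT.factorizable_induce S hS).exists_pmon
  let ι := {S // CanonClassIn G B S ∧ Disjoint (T S) U}
  have hset : (⋃ i : ι, T i) = Bᶜ \ U := by
    ext w
    simp only [Set.mem_iUnion, Set.mem_sdiff]
    constructor
    · rintro ⟨⟨S, hS, hSU⟩, hw⟩
      exact ⟨hT.subset_compl S hS hw, Set.disjoint_left.1 hSU hw⟩
    · rintro ⟨hwB, hwU⟩
      obtain ⟨S, hS, hw⟩ := hT.cover w hwB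
      exact ⟨⟨S, hS, (hU S hS).resolve_left fun h => hwU (h hw)⟩, hw⟩
  refine ⟨_, hset ▸ PMon.iUnion (N := fun i : ι => N i) ?_ fun i => hN i i.2.1⟩
  exact fun i j hij => hT.disjoint i j i.2.1 j.2.1 fun h => hij (Subtype.ext h)

theorem exists_pmon_compl_pair_of_union
    (hU : ∀ S, CanonClassIn G B S → T S ⊆ U ∨ Disjoint (T S) U) (hx : x ∈ B ∪ U) (hy : y ∈ B ∪ U)
    (h : ∃ N, PMon G ((B ∪ U) \ {x, y}) N) : ∃ N, PMon G {x, y}ᶜ N := by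
  obtain ⟨N, hN⟩ := h
  obtain ⟨N', hN'⟩ := hT.exists_pmon_compl hU
  have hdisj : Disjoint ((B ∪ U) \ {x, y}) (Bᶜ \ U) :=
    Set.disjoint_left.2 fun w hw hw' => by grind
  have hset : (B ∪ U) \ {x, y} ∪ Bᶜ \ U = {x, y}ᶜ := by
    ext w
    simp only [Set.mem_union, Set.mem_sdiff, Set.mem_compl_iff, Set.mem_insert_iff,
      Set.mem_singleton_iff] at hx hy ⊢
    grind
  exact ⟨_, hset ▸ hN.union hdisj hN'⟩

theorem exists_pmon_insert_diff (hS : CanonClassIn G B S) (ha : a ∈ S) (hy : y ∈ T S) :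
    ∃ N, PMon G (insert a (T S \ {y})) N := by
  obtain ⟨N, hN⟩ := (hT.factorizable_induce S hS).exists_pmon
  exact hN.exists_insert_diff hy (fun h => hT.subset_compl S hS h (hS.subset ha)) (hT.adj S hS a ha)

theorem exists_pmon_diff_union_diff (hS : CanonClassIn G B S) (ha : a ∈ B) (haS : a ∉ S)
    (hy : y ∈ T S) : ∃ N, PMon G (B \ {a} ∪ T S \ {y}) N := by
  obtain ⟨s, hs, hfac⟩ := hS.exists_factorizable_diff_pair
  obtain ⟨N, hN⟩ := (hfac a ha haS).exists_pmon
  obtain ⟨N', hN'⟩ := hT.exists_pmon_insert_diff hS hs hy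
  have hsB : s ∈ B := hS.subset hs
  have hTB := hT.subset_compl S hS
  have hdisj : Disjoint (B \ {s, a}) (insert s (T S \ {y})) :=
    Set.disjoint_left.2 fun w hw hw' => by grind
  have hset : B \ {s, a} ∪ insert s (T S \ {y}) = B \ {a} ∪ T S \ {y} := by
    ext w; grind
  exact ⟨_, hset ▸ hN.union hdisj hN'⟩

theorem exists_pmon_compl_pair_of_mem_tower [Finite V] (hB : Factorizable (G.induce B))
    (hS : CanonClassIn G B S) (hTS : Saturated (G.induce (T S))) (hx : x ∈ T S) (hy : y ∈ T S)
    (hxy : x ≠ y) (hadj : ¬ G.Adj x y) : ∃ N, PMon G {x, y}ᶜ N := by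
  refine hT.exists_pmon_compl_pair_of_union (fun S' hS' => hT.subset_or_disjoint hS hS')
    (Or.inr hx) (Or.inr hy) ?_
  obtain ⟨N, hN⟩ := hB.exists_pmon
  obtain ⟨N', hN'⟩ := hTS.exists_pmon_diff_pair hx hy hxy hadj
  have hTB := hT.subset_compl S hS
  have hdisj : Disjoint B (T S \ {x, y}) := Set.disjoint_left.2 fun w hw hw' => by grind
  have hset : B ∪ T S \ {x, y} = (B ∪ T S) \ {x, y} := by ext w; grind
  exact ⟨_, hset ▸ hN.union hdisj hN'⟩

theorem exists_pmon_compl_pair_of_mem_of_mem_tower (hS : CanonClassIn G B S) (hx : x ∈ B)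
    (hxS : x ∉ S) (hy : y ∈ T S) : ∃ N, PMon G {x, y}ᶜ N := by
  refine hT.exists_pmon_compl_pair_of_union (fun S' hS' => hT.subset_or_disjoint hS hS')
    (Or.inl hx) (Or.inr hy) ?_
  have hTB := hT.subset_compl S hS
  have hset : B \ {x} ∪ T S \ {y} = (B ∪ T S) \ {x, y} := by ext w; grind
  exact hset ▸ hT.exists_pmon_diff_union_diff hS hx hxS hy

theorem exists_pmon_compl_pair_of_mem_towers (hS : CanonClassIn G B S)
    (hS' : CanonClassIn G B S') (ha : a ∈ S) (haS' : a ∉ S') (hx : x ∈ T S) (hy : y ∈ T S') :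
    ∃ N, PMon G {x, y}ᶜ N := by
  have hU : ∀ R, CanonClassIn G B R → T R ⊆ T S ∪ T S' ∨ Disjoint (T R) (T S ∪ T S') := by
    intro R hR
    rcases hT.subset_or_disjoint hS hR with h | h
    · exact Or.inl (h.trans Set.subset_union_left)
    rcases hT.subset_or_disjoint hS' hR with h' | h'
    · exact Or.inl (h'.trans Set.subset_union_right)
    exact Or.inr (Set.disjoint_union_right.2 ⟨h, h'⟩)
  refine hT.exists_pmon_compl_pair_of_union hU (Or.inr (Or.inl hx)) (Or.inr (Or.inr hy)) ?_
  have haB : a ∈ B := hS.subset ha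
  obtain ⟨N, hN⟩ := hT.exists_pmon_insert_diff hS ha hx
  obtain ⟨N', hN'⟩ := hT.exists_pmon_diff_union_diff hS' haB haS' hy
  have hTB := hT.subset_compl S hS
  have hTB' := hT.subset_compl S' hS'
  have hTT' := Set.disjoint_left.1 (hT.disjoint S S' hS hS' fun h => haS' (h ▸ ha))
  have hdisj : Disjoint (insert a (T S \ {x})) (B \ {a} ∪ T S' \ {y}) :=
    Set.disjoint_left.2 fun w hw hw' => by grind
  have hset : insert a (T S \ {x}) ∪ (B \ {a} ∪ T S' \ {y}) = (B ∪ (T S ∪ T S')) \ {x, y} := by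
    ext w; grind
  exact ⟨_, hset ▸ hN.union hdisj hN'⟩

theorem exists_pmon_compl_pair [Finite V] (hB : Saturated (G.induce B))
    (hTS : ∀ S, CanonClassIn G B S → Saturated (G.induce (T S))) (hxy : x ≠ y)
    (hadj : ¬ G.Adj x y) : ∃ N, PMon G {x, y}ᶜ N := by
  have hmem (v : V) : v ∈ B ∨ ∃ S, CanonClassIn G B S ∧ v ∈ T S :=
    (em (v ∈ B)).imp_right (hT.cover v)
  obtain hx | ⟨S, hS, hx⟩ := hmem x <;> obtain hy | ⟨S', hS', hy⟩ := hmem y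
  · refine hT.exists_pmon_compl_pair_of_union (U := ∅) (fun _ _ => Or.inr (Set.disjoint_empty _))
      (Or.inl hx) (Or.inl hy) ?_
    simpa using hB.exists_pmon_diff_pair hx hy hxy hadj
  · exact hT.exists_pmon_compl_pair_of_mem_of_mem_tower hS' hx
      (fun h => hadj (hT.adj S' hS' x h y hy)) hy
  · rw [Set.pair_comm]
    exact hT.exists_pmon_compl_pair_of_mem_of_mem_tower hS hy
      (fun h => hadj (hT.adj S hS y h x hx).symm) hx
  by_cases hSS' : S = S'
  · subst hSS'
    exact hT.exists_pmon_compl_pair_of_mem_tower hB.1 hS (hTS S hS) hx hy hxy hadj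
  obtain ⟨a, ha, haS'⟩ | ⟨a, ha, haS⟩ : (∃ a ∈ S, a ∉ S') ∨ ∃ a ∈ S', a ∉ S := by
    by_contra! h
    exact hSS' (Set.Subset.antisymm h.1 h.2)
  · exact hT.exists_pmon_compl_pair_of_mem_towers hS hS' ha haS' hx hy
  · rw [Set.pair_comm]
    exact hT.exists_pmon_compl_pair_of_mem_towers hS' hS ha haS hy hx

theorem factorizable (hB : Factorizable (G.induce B)) : Factorizable G := by
  obtain ⟨N, hN⟩ := hB.exists_pmon
  obtain ⟨N', hN'⟩ := hT.exists_pmon_compl (U := ∅) fun _ _ => Or.inr (Set.disjoint_empty _)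
  have hM := hN.union disjoint_compl_right (Set.sdiff_empty ▸ hN')
  rw [Set.union_compl_self, PMon.univ_iff] at hM
  exact ⟨_, hM⟩

end CathedralTowers

end Cathedral

theorem stmt17_general [Finite V] (G : SimpleGraph V) (B : Set V) (T : Set V → Set V)
    (hBsat : Saturated (G.induce B))
    (hTsub : ∀ S, CanonClassIn G B S → T S ⊆ (Bᶜ : Set V))
    (hTdis : ∀ S S', CanonClassIn G B S → CanonClassIn G B S' → S ≠ S' →
      Disjoint (T S) (T S'))
    (hTcover : ∀ w ∈ (Bᶜ : Set V), ∃ S, CanonClassIn G B S ∧ w ∈ T S)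
    (hTsat : ∀ S, CanonClassIn G B S → Saturated (G.induce (T S)))
    (hjoin : ∀ S, CanonClassIn G B S → ∀ a ∈ S, ∀ b ∈ T S, G.Adj a b) :
    Saturated G := by
  have hT : CathedralTowers G B T :=
    ⟨hTsub, hTdis, hTcover, fun S hS => (hTsat S hS).1, hjoin⟩
  exact saturated_of_forall_exists_pmon_compl_pair (hT.factorizable hBsat.1)
    fun _ _ hxy hadj => hT.exists_pmon_compl_pair hBsat hTsat hxy hadj

theorem stmt17 [Finite V] (G : SimpleGraph V) (B : Set V) (T : Set V → Set V)
    (hBsat : Saturated (G.induce B)) (hBelem : Elementary (G.induce B))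
    (hTsub : ∀ S, CanonClassIn G B S → T S ⊆ (Bᶜ : Set V))
    (hTdis : ∀ S S', CanonClassIn G B S → CanonClassIn G B S' → S ≠ S' →
      Disjoint (T S) (T S'))
    (hTcover : ∀ w ∈ (Bᶜ : Set V), ∃ S, CanonClassIn G B S ∧ w ∈ T S)
    (hTsat : ∀ S, CanonClassIn G B S → Saturated (G.induce (T S)))
    (hjoin : ∀ S, CanonClassIn G B S → ∀ a ∈ S, ∀ b ∈ T S, G.Adj a b)
    (hedges : ∀ a b : V, G.Adj a b → (a ∈ B ∧ b ∈ B) ∨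
      ∃ S, CanonClassIn G B S ∧
        ((a ∈ T S ∧ b ∈ T S) ∨ (a ∈ S ∧ b ∈ T S) ∨ (a ∈ T S ∧ b ∈ S))) :
    Saturated G :=
  stmt17_general G B T hBsat hTsub hTdis hTcover hTsat hjoin
end

section
/- Let G be a factorizable graph, M a perfect matching, and suppose G has two distinct connected components K and L. Then there exist u ∈ V(K), v ∈ V(L) with uv ∉ E(G) such that adding uv to G creates no new perfect matching; hence any disconnected factorizable graph is not saturated. -/
open SimpleGraph

variable {V : Type*}

/-!
If a perfect matching `N` of `G + ab` used the new edge `ab`, then on the component `C` of `a`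
in `G` the remaining edges of `N` would perfectly match `C \ {a}`, since `b ∉ C`. As `M` perfectly
matches `C`, both `|C|` and `|C| - 1` would be even.
-/

namespace IsPerfectMatchingSet

variable {G H : SimpleGraph V} {M : Set (Sym2 V)}

lemma mono (hGH : G ≤ H) (hM : IsPerfectMatchingSet G M) : IsPerfectMatchingSet H M :=
  ⟨hM.1.trans (edgeSet_mono hGH), hM.2⟩

lemma eq_of_mem (hM : IsPerfectMatchingSet G M) {x y z : V} (hy : s(x, y) ∈ M)
    (hz : s(x, z) ∈ M) : y = z := by
  obtain ⟨e, -, huniq⟩ := hM.2 x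
  have hyz : s(x, y) = s(x, z) :=
    (huniq _ ⟨hy, Sym2.mem_mk_left x y⟩).trans (huniq _ ⟨hz, Sym2.mem_mk_left x z⟩).symm
  exact Sym2.congr_right.mp hyz

lemma even_ncard_of_closed [Finite V] (hM : IsPerfectMatchingSet G M) (s : Set V)
    (hs : ∀ x ∈ s, ∀ y, s(x, y) ∈ M → y ∈ s) : Even s.ncard := by
  let S : G.Subgraph :=
    { verts := s
      Adj := fun x y => x ∈ s ∧ y ∈ s ∧ s(x, y) ∈ M
      adj_sub := fun h => hM.1 h.2.2
      edge_vert := fun h => h.1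
      symm := ⟨fun x y h => ⟨h.2.1, h.1, Sym2.eq_swap ▸ h.2.2⟩⟩ }
  have hS : S.IsMatching := by
    intro x hx
    obtain ⟨e, ⟨he, hxe⟩, huniq⟩ := hM.2 x
    obtain ⟨y, rfl⟩ := Sym2.mem_iff_exists.mp hxe
    exact ⟨y, ⟨hx, hs x hx y he, he⟩, fun z hz => hM.eq_of_mem hz.2.2 he⟩
  have := Fintype.ofFinite s
  have := hS.even_card
  rwa [Set.ncard_eq_toFinset_card']

end IsPerfectMatchingSet

section AddEdge

variable [Finite V] {G : SimpleGraph V} {M N : Set (Sym2 V)} {a b : V}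

lemma notMem_of_isPerfectMatchingSet_sup_edge (hM : IsPerfectMatchingSet G M)
    (hab : ¬ G.Reachable a b)
    (hN : IsPerfectMatchingSet (G ⊔ fromEdgeSet {s(a, b)}) N) : s(a, b) ∉ N := by
  intro habN
  set C := {x | G.Reachable a x}
  have hbC : b ∉ C := hab
  have hC : Even C.ncard :=
    hM.even_ncard_of_closed C fun x hx y hxy =>
      hx.trans (G.mem_edgeSet.mp (hM.1 hxy)).reachable
  have hCa : Even (C \ {a}).ncard := by
    refine hN.even_ncard_of_closed _ fun x ⟨hxC, hxa⟩ y hxy => ⟨?_, fun hya => ?_⟩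
    · rcases (hN.1 hxy : (G ⊔ fromEdgeSet {s(a, b)}).Adj x y) with hG | ⟨hab', -⟩
      · exact hxC.trans hG.reachable
      · rcases Sym2.eq_iff.mp hab' with ⟨rfl, -⟩ | ⟨rfl, -⟩
        · exact absurd rfl hxa
        · exact absurd hxC hbC
    · rw [hya, Sym2.eq_swap] at hxy
      exact hbC (hN.eq_of_mem hxy habN ▸ hxC)
  have haC : a ∈ C := Reachable.refl a
  rw [Set.ncard_sdiff_singleton_of_mem haC] at hCa
  have hpos : 0 < C.ncard := (Set.ncard_pos C.toFinite).mpr ⟨a, haC⟩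
  obtain ⟨k, hk⟩ := hC
  obtain ⟨l, hl⟩ := hCa
  omega

lemma isPerfectMatchingSet_sup_edge_iff (hM : IsPerfectMatchingSet G M)
    (hab : ¬ G.Reachable a b) :
    IsPerfectMatchingSet (G ⊔ fromEdgeSet {s(a, b)}) N ↔ IsPerfectMatchingSet G N := by
  refine ⟨fun hN => ⟨fun e he => ?_, hN.2⟩, IsPerfectMatchingSet.mono le_sup_left⟩
  rcases (by simpa using hN.1 he : e ∈ G.edgeSet ∨ e = s(a, b) ∧ ¬ e.IsDiag) with hG | ⟨rfl, -⟩
  · exact hG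
  · exact absurd he (notMem_of_isPerfectMatchingSet_sup_edge hM hab hN)

end AddEdge

theorem stmt19 [Finite V] (G : SimpleGraph V) (M : Set (Sym2 V))
    (hM : IsPerfectMatchingSet G M) (a b : V) (hab : ¬ G.Reachable a b) :
    (∃ u v : V, G.Reachable a u ∧ G.Reachable b v ∧ ¬ G.Adj u v ∧
        ∀ N, IsPerfectMatchingSet (G ⊔ SimpleGraph.fromEdgeSet {s(u, v)}) N →
          IsPerfectMatchingSet G N) ∧
      ¬ Saturated G := by
  have hnadj : ¬ G.Adj a b := fun h => hab h.reachable
  have hne : a ≠ b := fun h => hab (h ▸ Reachable.refl a)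
  refine ⟨⟨a, b, .refl a, .refl b, hnadj,
    fun N => (isPerfectMatchingSet_sup_edge_iff hM hab).mp⟩, fun ⟨_, hsat⟩ => ?_⟩
  have hsame : {N | IsPerfectMatchingSet (G ⊔ fromEdgeSet {s(a, b)}) N} =
      {N | IsPerfectMatchingSet G N} :=
    Set.ext fun N => isPerfectMatchingSet_sup_edge_iff hM hab
  exact (hsat a b hne hnadj).ne (by rw [hsame])
end
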